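/- arXiv:2506.13077 — 2 statements merged into one kernel-verified Lean document; each statement's English description precedes it below -/
import Mathlib

section
/- Let N ≥ 6 and define, for p ∈ (N/(N-2), (N+2)/(N-2)] with q determined by 1/(p+1) + 1/(q+1) = (N-2)/N, the function σ₃(p) := N - 2N/(p+1) + (1 - N/((p+1)(N-2)))·(N/(p+1) - 2 - N/((p+1)(N-2))) - N/(2(q+1)). Then σ₃ is strictly increasing on this interval and σ₃(N/(N-2)) = (3N-2)/(2(N-1)²) > 0; hence σ₃(p) > 0 for all p in (N/(N-2), (N+2)/(N-2)]. -/
/-!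
In the variable `u = N / (p + 1)`, σ₃ is the quadratic
`(N - 2)/2 + (4 - N)/(2(N - 2)) u - (N - 3)/(N - 2)² u²`, whose vertex lies at `u ≤ 0` once
`N ≥ 4`. It is therefore strictly decreasing in `u ≥ 0`, hence strictly increasing in `p > -1`,
and positivity on `(N/(N-2), (N+2)/(N-2)]` follows from its value at the left endpoint.
-/

/-- The function σ₃ from the paper; here `N/(2(q+1)) = (N - 2 - N/(p+1))/2` by the
criticality relation. -/
noncomputable def sigma3 (N p : ℝ) : ℝ :=
  N - 2 * N / (p + 1) +
    (1 - N / ((p + 1) * (N - 2))) * (N / (p + 1) - 2 - N / ((p + 1) * (N - 2))) -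
    (N - 2 - N / (p + 1)) / 2

noncomputable def sigma3Quadratic (N u : ℝ) : ℝ :=
  (N - 2) / 2 + (4 - N) / (2 * (N - 2)) * u - (N - 3) / (N - 2) ^ 2 * u ^ 2

lemma sigma3_eq_sigma3Quadratic {N p : ℝ} (hN : N ≠ 2) (hp : p ≠ -1) :
    sigma3 N p = sigma3Quadratic N (N / (p + 1)) := by
  have hN' : N - 2 ≠ 0 := sub_ne_zero.mpr hN
  have hp' : p + 1 ≠ 0 := by contrapose! hp; linarith
  unfold sigma3 sigma3Quadratic
  field_simp
  ring

lemma sigma3Quadratic_strictAntiOn {N : ℝ} (hN : 4 ≤ N) :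
    StrictAntiOn (sigma3Quadratic N) (Set.Ici 0) := by
  intro v hv w _ hvw
  have hN2 : 0 < N - 2 := by linarith
  have hdiff : sigma3Quadratic N v - sigma3Quadratic N w =
      (w - v) * ((N - 4) * (N - 2) + 2 * (N - 3) * (v + w)) / (2 * (N - 2) ^ 2) := by
    unfold sigma3Quadratic
    field_simp
    ring
  have hpos : 0 < (w - v) * ((N - 4) * (N - 2) + 2 * (N - 3) * (v + w)) / (2 * (N - 2) ^ 2) := by
    have hsum : 0 < (N - 4) * (N - 2) + 2 * (N - 3) * (v + w) := by
      nlinarith [mul_nonneg (sub_nonneg.mpr hN) hN2.le, Set.mem_Ici.mp hv]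
    have hwv : 0 < w - v := sub_pos.mpr hvw
    positivity
  linarith

lemma sigma3_strictMonoOn {N : ℝ} (hN : 4 ≤ N) : StrictMonoOn (sigma3 N) (Set.Ioi (-1)) := by
  intro x hx y hy hxy
  have hx1 : 0 < x + 1 := by linarith [Set.mem_Ioi.mp hx]
  have hy1 : 0 < y + 1 := by linarith [Set.mem_Ioi.mp hy]
  have hN0 : 0 < N := by linarith
  rw [sigma3_eq_sigma3Quadratic (by linarith) hx.ne', sigma3_eq_sigma3Quadratic (by linarith) hy.ne']
  exact sigma3Quadratic_strictAntiOn hN (div_pos hN0 hy1).le (div_pos hN0 hx1).le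
    (div_lt_div_of_pos_left hN0 hx1 (by linarith))

lemma sigma3_div_sub_two {N : ℝ} (h1 : N ≠ 1) (h2 : N ≠ 2) :
    sigma3 N (N / (N - 2)) = (3 * N - 2) / (2 * (N - 1) ^ 2) := by
  have h1' : N - 1 ≠ 0 := sub_ne_zero.mpr h1
  have h2' : N - 2 ≠ 0 := sub_ne_zero.mpr h2
  have hp : N / (N - 2) + 1 = 2 * (N - 1) / (N - 2) := by
    field_simp
    ring
  unfold sigma3
  rw [hp]
  field_simp
  ring

theorem stmt_6 (N : ℕ) (hN : 6 ≤ N) :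
    StrictMonoOn (sigma3 N) (Set.Icc ((N : ℝ) / (N - 2)) (((N : ℝ) + 2) / (N - 2))) ∧
    sigma3 N ((N : ℝ) / (N - 2)) = (3 * N - 2) / (2 * ((N : ℝ) - 1) ^ 2) ∧
    0 < (3 * (N : ℝ) - 2) / (2 * ((N : ℝ) - 1) ^ 2) ∧
    ∀ p ∈ Set.Ioc ((N : ℝ) / (N - 2)) (((N : ℝ) + 2) / (N - 2)), 0 < sigma3 N p := by
  have hN6 : (6 : ℝ) ≤ N := by exact_mod_cast hN
  have hleft : -1 < (N : ℝ) / (N - 2) := (neg_one_lt_zero).trans (div_pos (by linarith) (by linarith))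
  have hmono := sigma3_strictMonoOn (N := N) (by linarith)
  have hval := sigma3_div_sub_two (N := N) (by linarith) (by linarith)
  have hvalpos : 0 < (3 * (N : ℝ) - 2) / (2 * ((N : ℝ) - 1) ^ 2) :=
    div_pos (by linarith) (mul_pos two_pos (pow_pos (by linarith) 2))
  refine ⟨hmono.mono fun p hp => lt_of_lt_of_le hleft hp.1, hval, hvalpos, fun p hp => ?_⟩
  calc 0 < sigma3 N ((N : ℝ) / (N - 2)) := hval ▸ hvalpos
    _ < sigma3 N p := hmono hleft (hleft.trans hp.1) hp.1
end

section
/- Let α, β > 0, 0 < σ ≤ β, and x̃₁ ≠ x̃₂ in ℝ^N. Then there exists a constant C > 0 (depending only on α, β, σ) such that for all y ∈ ℝ^N with |y - x̃₂| ≥ |x̃₁ - x̃₂|/2, one has (1+|y-x̃₁|)^{-α}(1+|y-x̃₂|)^{-β} ≤ C |x̃₁-x̃₂|^{-σ} [ (1+|y-x̃₁|)^{-(α+β-σ)} + (1+|y-x̃₂|)^{-(α+β-σ)} ]. -/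
/-!
Write `a = |y - x̃₁|`, `b = |y - x̃₂|`, `d = |x̃₁ - x̃₂|`. Peel off the factor `(1 + b)^(-σ)`
from `(1 + b)^(-β)`: since `b ≥ d/2` it is at most `2^σ d^(-σ)`. What remains,
`(1 + a)^(-α) (1 + b)^(-(β - σ))`, is a product of powers with nonpositive exponents, so it is
at most `min (1 + a) (1 + b)` raised to `-(α + β - σ)`, hence at most the sum of both powers.
-/

open Real

lemma rpow_neg_mul_rpow_neg_le_add {u v s t : ℝ} (hu : 0 < u) (hv : 0 < v) (hs : 0 ≤ s)
    (ht : 0 ≤ t) : u ^ (-s) * v ^ (-t) ≤ u ^ (-(s + t)) + v ^ (-(s + t)) := by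
  rcases le_total u v with huv | hvu
  · calc u ^ (-s) * v ^ (-t) ≤ u ^ (-s) * u ^ (-t) :=
          mul_le_mul_of_nonneg_left (rpow_le_rpow_of_nonpos hu huv (by linarith)) (by positivity)
      _ = u ^ (-(s + t)) := by rw [← rpow_add hu, neg_add]
      _ ≤ _ := le_add_of_nonneg_right (by positivity)
  · calc u ^ (-s) * v ^ (-t) ≤ v ^ (-s) * v ^ (-t) :=
          mul_le_mul_of_nonneg_right (rpow_le_rpow_of_nonpos hv hvu (by linarith)) (by positivity)
      _ = v ^ (-(s + t)) := by rw [← rpow_add hv, neg_add]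
      _ ≤ _ := le_add_of_nonneg_left (by positivity)

lemma rpow_neg_le_two_rpow_mul_rpow_neg {r d σ : ℝ} (hd : 0 < d) (hdr : d / 2 ≤ r) (hσ : 0 ≤ σ) :
    r ^ (-σ) ≤ 2 ^ σ * d ^ (-σ) :=
  calc r ^ (-σ) ≤ (d / 2) ^ (-σ) := rpow_le_rpow_of_nonpos (by positivity) hdr (by linarith)
    _ = 2 ^ σ * d ^ (-σ) := by
      rw [div_eq_mul_inv, mul_rpow hd.le (by norm_num), inv_rpow (by norm_num),
        rpow_neg (by norm_num : (0 : ℝ) ≤ 2), inv_inv, mul_comm]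

lemma one_add_rpow_neg_mul_le {a b d α β σ : ℝ} (ha : 0 ≤ a) (hd : 0 < d) (hdb : d / 2 ≤ b)
    (hα : 0 ≤ α) (hσ : 0 ≤ σ) (hσβ : σ ≤ β) :
    (1 + a) ^ (-α) * (1 + b) ^ (-β) ≤
      2 ^ σ * d ^ (-σ) * ((1 + a) ^ (-(α + β - σ)) + (1 + b) ^ (-(α + β - σ))) := by
  have hb : 0 < 1 + b := by linarith
  have hsplit : (1 + b) ^ (-β) = (1 + b) ^ (-(β - σ)) * (1 + b) ^ (-σ) := by
    rw [← rpow_add hb]; ring_nf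
  have hpeel : (1 + b) ^ (-σ) ≤ 2 ^ σ * d ^ (-σ) :=
    rpow_neg_le_two_rpow_mul_rpow_neg hd (by linarith) hσ
  have hrest := rpow_neg_mul_rpow_neg_le_add (by linarith : (0 : ℝ) < 1 + a) hb hα
    (sub_nonneg.2 hσβ)
  rw [← add_sub_assoc] at hrest
  calc (1 + a) ^ (-α) * (1 + b) ^ (-β)
      = (1 + a) ^ (-α) * (1 + b) ^ (-(β - σ)) * (1 + b) ^ (-σ) := by rw [hsplit, mul_assoc]
    _ ≤ ((1 + a) ^ (-(α + β - σ)) + (1 + b) ^ (-(α + β - σ))) * (2 ^ σ * d ^ (-σ)) := by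
      gcongr
    _ = _ := mul_comm _ _

theorem stmt_17_general (N : ℕ) (α β σ : ℝ) (hα : 0 < α) (hσ0 : 0 < σ) (hσβ : σ ≤ β) :
    ∃ C > 0, ∀ x₁ x₂ : EuclideanSpace ℝ (Fin N), x₁ ≠ x₂ →
      ∀ y : EuclideanSpace ℝ (Fin N), ‖x₁ - x₂‖ / 2 ≤ ‖y - x₂‖ →
        (1 + ‖y - x₁‖) ^ (-α) * (1 + ‖y - x₂‖) ^ (-β) ≤
          C * ‖x₁ - x₂‖ ^ (-σ) *
            ((1 + ‖y - x₁‖) ^ (-(α + β - σ)) + (1 + ‖y - x₂‖) ^ (-(α + β - σ))) := by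
  refine ⟨2 ^ σ, by positivity, fun x₁ x₂ hne y hy => ?_⟩
  exact one_add_rpow_neg_mul_le (norm_nonneg _) (norm_pos_iff.2 (sub_ne_zero.2 hne)) hy hα.le
    hσ0.le hσβ

theorem stmt_17 (N : ℕ) (α β σ : ℝ) (hα : 0 < α) (hβ : 0 < β) (hσ0 : 0 < σ) (hσβ : σ ≤ β) :
    ∃ C > 0, ∀ x₁ x₂ : EuclideanSpace ℝ (Fin N), x₁ ≠ x₂ →
      ∀ y : EuclideanSpace ℝ (Fin N), ‖x₁ - x₂‖ / 2 ≤ ‖y - x₂‖ →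
        (1 + ‖y - x₁‖) ^ (-α) * (1 + ‖y - x₂‖) ^ (-β) ≤
          C * ‖x₁ - x₂‖ ^ (-σ) *
            ((1 + ‖y - x₁‖) ^ (-(α + β - σ)) + (1 + ‖y - x₂‖) ^ (-(α + β - σ))) :=
  stmt_17_general N α β σ hα hσ0 hσβ
end
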